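/- arXiv:2307.13080 — 9 statements merged into one kernel-verified Lean document; each statement's English description precedes it below -/
import Mathlib

section
/- In any global state s, if Downslant-Left(i) holds for a vertex i and v₃^ℓ(i) is occupied (cases 5 and 6 of the GSGS algorithm), then the occupied vertex v₂^ℓ(i) does not satisfy Impedensable-GSGS; symmetrically, if Downslant-Right(i) holds and v₃^r(i) is occupied, then v₂^r(i) does not satisfy Impedensable-GSGS. -/
open scoped Classical

namespace GSGS

/-- Vertices of the infinite triangular grid, coordinatized by ℤ × ℤ. -/
abbrev V : Type := ℤ × ℤ

/-- down neighbour -/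
def v1 (i : V) : V := (i.1, i.2 - 1)
/-- up neighbour -/
def v4 (i : V) : V := (i.1, i.2 + 1)
/-- down-left neighbour -/
def v2l (i : V) : V := (i.1 - 1, i.2)
/-- down-right neighbour -/
def v2r (i : V) : V := (i.1 + 1, i.2 - 1)
/-- up-left neighbour -/
def v3l (i : V) : V := (i.1 - 1, i.2 + 1)
/-- up-right neighbour -/
def v3r (i : V) : V := (i.1 + 1, i.2)

/-- Adjacency on the triangular grid. -/
def Adj (a b : V) : Prop :=
  b = v1 a ∨ b = v2l a ∨ b = v2r a ∨ b = v3l a ∨ b = v3r a ∨ b = v4 a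

/-- y-coordinate of a vertex (p,q) is q + p/2. -/
def yC (v : V) : ℚ := (v.2 : ℚ) + (v.1 : ℚ) / 2

/-- A global state of n robots is a function `Fin n → V`; a vertex is occupied
iff some robot is at it. -/
def Occ {n : ℕ} (s : Fin n → V) (x : V) : Prop := ∃ r, s r = x

/-- Only-At(i, L): the occupied neighbours of i are exactly those in L. -/
def OnlyAt (occ : V → Prop) (i : V) (L : Set V) : Prop :=
  ∀ j, Adj i j → (occ j ↔ j ∈ L)

def Extreme (occ : V → Prop) (i : V) : Prop :=
  ¬ occ (v4 i) ∧ ((occ (v2r i) ∨ occ (v3r i)) → (¬ occ (v2l i) ∧ ¬ occ (v3l i)))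

def Terminating (occ : V → Prop) (i : V) : Prop :=
  Extreme occ i ∧ ∀ j, Adj i j → ¬ occ j

def Staying (occ : V → Prop) (i : V) : Prop :=
  Extreme occ i ∧
    (OnlyAt occ i {v3r i} ∨ OnlyAt occ i {v3l i} ∨
     OnlyAt occ i {v1 i, v3r i} ∨ OnlyAt occ i {v1 i, v3l i})

def Downward (occ : V → Prop) (i : V) : Prop :=
  Extreme occ i ∧ occ (v1 i) ∧ ¬ occ (v3r i) ∧ ¬ occ (v3l i)

def DownslantRight (occ : V → Prop) (i : V) : Prop :=
  Extreme occ i ∧ ¬ Downward occ i ∧ ¬ Staying occ i ∧ ¬ Terminating occ i ∧ occ (v2r i)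

def DownslantLeft (occ : V → Prop) (i : V) : Prop :=
  Extreme occ i ∧ ¬ Downward occ i ∧ ¬ Staying occ i ∧ ¬ Terminating occ i ∧ occ (v2l i)

def NonExtreme (occ : V → Prop) (i : V) : Prop :=
  ¬ Extreme occ i ∧ occ (v2r i) ∧ occ (v2l i) ∧
    ¬ occ (v3r i) ∧ ¬ occ (v3l i) ∧ ¬ occ (v4 i)

def Impedensable (occ : V → Prop) (i : V) : Prop :=
  Downward occ i ∨ DownslantRight occ i ∨ DownslantLeft occ i ∨ NonExtreme occ i

/-- The prescribed target of an impedensable robot under the GSGS algorithm: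
v₂^r(i) if Downslant-Right(i), v₂^ℓ(i) if Downslant-Left(i), and v₁(i) in the
Downward / Non-Extreme cases. -/
noncomputable def target (occ : V → Prop) (i : V) : V :=
  if DownslantRight occ i then v2r i
  else if DownslantLeft occ i then v2l i
  else v1 i

/-- A step of the GSGS algorithm: a nonempty set M of robots at impedensable
vertices simultaneously move to their prescribed targets; all others stay. -/
def Step {n : ℕ} (s s' : Fin n → V) : Prop :=
  ∃ M : Set (Fin n), M.Nonempty ∧
    (∀ r ∈ M, Impedensable (Occ s) (s r)) ∧
    ∀ r, s' r = if r ∈ M then target (Occ s) (s r) else s r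

/-- The synchronous step: every robot at an impedensable vertex moves. -/
def SyncStep {n : ℕ} (s s' : Fin n → V) : Prop :=
  ∀ r, s' r = if Impedensable (Occ s) (s r) then target (Occ s) (s r) else s r

/-- Connectivity of the visibility graph induced on the occupied vertices. -/
def ConnectedOcc (occ : V → Prop) : Prop :=
  ∀ a b, occ a → occ b →
    Relation.ReflTransGen (fun x y => occ x ∧ occ y ∧ Adj x y) a b

/-- Minimum of f over the occupied vertices. -/
noncomputable def minVal {n : ℕ} {α : Type*} [LinearOrder α]
    (s : Fin n → V) (f : V → α) (hn : Nonempty (Fin n)) : α :=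
  (Finset.image (fun r => f (s r)) Finset.univ).min'
    ((Finset.univ_nonempty_iff.mpr hn).image _)

/-- Maximum of f over the occupied vertices. -/
noncomputable def maxVal {n : ℕ} {α : Type*} [LinearOrder α]
    (s : Fin n → V) (f : V → α) (hn : Nonempty (Fin n)) : α :=
  (Finset.image (fun r => f (s r)) Finset.univ).max'
    ((Finset.univ_nonempty_iff.mpr hn).image _)

/-- Algorithm II guards. -/
def DownwardII (occ : V → Prop) (i : V) : Prop :=
  (occ (v1 i) ∧ ¬ occ (v3l i) ∧ ¬ occ (v4 i) ∧ ¬ occ (v3r i)) ∨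
    OnlyAt occ i {v2l i, v2r i}

def DownslantLeftII (occ : V → Prop) (i : V) : Prop := OnlyAt occ i {v2l i}

def DownslantRightII (occ : V → Prop) (i : V) : Prop := OnlyAt occ i {v2r i}

def IIEnabled (occ : V → Prop) (i : V) : Prop :=
  DownwardII occ i ∨ DownslantRightII occ i ∨ DownslantLeftII occ i

/-- The prescribed target under Algorithm II. -/
noncomputable def targetII (occ : V → Prop) (i : V) : V :=
  if DownslantRightII occ i then v2r i
  else if DownslantLeftII occ i then v2l i
  else v1 i

/-- The synchronous step of Algorithm II. -/
def SyncStepII {n : ℕ} (s s' : Fin n → V) : Prop :=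
  ∀ r, s' r = if IIEnabled (Occ s) (s r) then targetII (Occ s) (s r) else s r

/-- cases 5 and 6 of GSGS: if Downslant-Left(i) and v₃^ℓ(i) is
occupied then v₂^ℓ(i) is not impedensable; symmetrically on the right. -/
theorem stmt3 (n : ℕ) (s : Fin n → V) (i : V) :
    (DownslantLeft (Occ s) i → Occ s (v3l i) → ¬ Impedensable (Occ s) (v2l i)) ∧
    (DownslantRight (Occ s) i → Occ s (v3r i) → ¬ Impedensable (Occ s) (v2r i)) := by
  constructor
  · intro _ h3 himp
    have hv4 : Occ s (v4 (v2l i)) := by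
      have : v4 (v2l i) = v3l i := by simp [v4, v2l, v3l]
      rw [this]; exact h3
    rcases himp with h | h | h | h
    · exact h.1.1 hv4
    · exact h.1.1 hv4
    · exact h.1.1 hv4
    · exact h.2.2.2.2.2 hv4
  · intro _ h3 himp
    have hv4 : Occ s (v4 (v2r i)) := by
      have : v4 (v2r i) = v3r i := by simp [v4, v2r, v3r]
      rw [this]; exact h3
    rcases himp with h | h | h | h
    · exact h.1.1 hv4
    · exact h.1.1 hv4
    · exact h.1.1 hv4
    · exact h.2.2.2.2.2 hv4

end GSGS
end

section
/- In any global state s, if a vertex i satisfies Impedensable-GSGS(i) and t is the prescribed target of i under the GSGS algorithm (t=v₁(i) if Downward(i) or Non-Extreme(i), t=v₂^r(i) if Downslant-Right(i), t=v₂^ℓ(i) if Downslant-Left(i)), then t is adjacent to i, and every occupied neighbour of i in s is either equal to t or adjacent to t (the moving robot stays connected to all robots that were its neighbours before it moved). -/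
open scoped Classical

namespace GSGS

/-- the prescribed target of an impedensable robot is adjacent
to it, and every occupied neighbour of the robot is equal or adjacent to the
target (the moving robot stays connected to its former neighbours). -/
theorem stmt5 (n : ℕ) (s : Fin n → V) (i : V)
    (h : Impedensable (Occ s) i) :
    Adj i (target (Occ s) i) ∧
    ∀ j, Adj i j → Occ s j →
      (j = target (Occ s) i ∨ Adj (target (Occ s) i) j) := by
  set occ := Occ s with hocc
  by_cases hR : DownslantRight occ i
  · have ht : target occ i = v2r i := if_pos hR
    rw [ht]
    obtain ⟨⟨h4, hex⟩, _, _, _, h2r⟩ := hR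
    have hleft := hex (Or.inl h2r)
    refine ⟨by simp [Adj], ?_⟩
    intro j hj hoj
    rcases hj with rfl | rfl | rfl | rfl | rfl | rfl
    · right; simp [Adj, v1, v2l, v2r, v3l, v3r, v4, Prod.ext_iff]
    · exact absurd hoj hleft.1
    · exact Or.inl rfl
    · exact absurd hoj hleft.2
    · right; simp [Adj, v1, v2l, v2r, v3l, v3r, v4, Prod.ext_iff]
    · exact absurd hoj h4
  · by_cases hL : DownslantLeft occ i
    · have ht : target occ i = v2l i := by
        rw [target, if_neg hR, if_pos hL]
      rw [ht]
      obtain ⟨⟨h4, hex⟩, _, _, _, h2l⟩ := hL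
      have h2r : ¬ occ (v2r i) := fun h => (hex (Or.inl h)).1 h2l
      have h3r : ¬ occ (v3r i) := fun h => (hex (Or.inr h)).1 h2l
      refine ⟨by simp [Adj], ?_⟩
      intro j hj hoj
      rcases hj with rfl | rfl | rfl | rfl | rfl | rfl
      · right; simp [Adj, v1, v2l, v2r, v3l, v3r, v4, Prod.ext_iff]
      · exact Or.inl rfl
      · exact absurd hoj h2r
      · right; simp [Adj, v1, v2l, v2r, v3l, v3r, v4, Prod.ext_iff]
      · exact absurd hoj h3r
      · exact absurd hoj h4
    · have ht : target occ i = v1 i := by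
        rw [target, if_neg hR, if_neg hL]
      rw [ht]
      have hfacts : ¬ occ (v3r i) ∧ ¬ occ (v3l i) ∧ ¬ occ (v4 i) := by
        rcases h with hD | hD | hD | hD
        · exact ⟨hD.2.2.1, hD.2.2.2, hD.1.1⟩
        · exact absurd hD hR
        · exact absurd hD hL
        · exact ⟨hD.2.2.2.1, hD.2.2.2.2.1, hD.2.2.2.2.2⟩
      obtain ⟨h3r, h3l, h4⟩ := hfacts
      refine ⟨by simp [Adj], ?_⟩
      intro j hj hoj
      rcases hj with rfl | rfl | rfl | rfl | rfl | rfl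
      · exact Or.inl rfl
      · right; simp [Adj, v1, v2l, v2r, v3l, v3r, v4, Prod.ext_iff]
      · right; simp [Adj, v1, v2l, v2r, v3l, v3r, v4, Prod.ext_iff]
      · exact absurd hoj h3l
      · exact absurd hoj h3r
      · exact absurd hoj h4

end GSGS
end

section
/- If the visibility graph of a global state s is connected and s' is obtained from s by a step of the GSGS algorithm (any nonempty set of robots at vertices satisfying Impedensable-GSGS simultaneously move to their prescribed targets), then the visibility graph of s' is connected. -/
open scoped Classical

namespace GSGS

section Aux

variable (occ : V → Prop)

lemma adj_symm {a b : V} (h : Adj a b) : Adj b a := by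
  obtain ⟨p, q⟩ := a
  rcases h with h|h|h|h|h|h <;> subst h <;>
    simp [Adj, v1, v2l, v2r, v3l, v3r, v4, Prod.ext_iff] <;> omega

lemma not_imped_of_v4 {i : V} (h : occ (v4 i)) : ¬ Impedensable occ i := by
  rintro (hd|hd|hd|hd)
  · exact hd.1.1 h
  · exact hd.1.1 h
  · exact hd.1.1 h
  · exact hd.2.2.2.2.2 h

lemma target_of_v3l {i : V} (h3 : occ (v3l i)) (h : Impedensable occ i) :
    target occ i = v2l i := by
  have hdsr : ¬ DownslantRight occ i := fun hd => (hd.1.2 (Or.inl hd.2.2.2.2)).2 h3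
  have hdsl : DownslantLeft occ i := by
    rcases h with hd|hd|hd|hd
    · exact absurd h3 hd.2.2.2
    · exact absurd hd hdsr
    · exact hd
    · exact absurd h3 hd.2.2.2.2.1
  rw [target, if_neg hdsr, if_pos hdsl]

lemma target_of_v3r {i : V} (h3 : occ (v3r i)) (h : Impedensable occ i) :
    target occ i = v2r i := by
  have hdsr : DownslantRight occ i := by
    rcases h with hd|hd|hd|hd
    · exact absurd h3 hd.2.2.1
    · exact hd
    · exact absurd hd.2.2.2.2 (hd.1.2 (Or.inr h3)).1
    · exact absurd h3 hd.2.2.2.1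
  rw [target, if_pos hdsr]

lemma target_mem {i : V} : target occ i = v1 i ∨ target occ i = v2l i ∨
    target occ i = v2r i := by
  rw [target]
  split
  · exact Or.inr (Or.inr rfl)
  · split
    · exact Or.inr (Or.inl rfl)
    · exact Or.inl rfl

lemma target_of_v2r {i : V} (h2 : occ (v2r i)) :
    target occ i = v1 i ∨ target occ i = v2r i := by
  have hdsl : ¬ DownslantLeft occ i := fun hd => (hd.1.2 (Or.inl h2)).1 hd.2.2.2.2
  by_cases hdsr : DownslantRight occ i
  · rw [target, if_pos hdsr]; exact Or.inr rfl
  · rw [target, if_neg hdsr, if_neg hdsl]; exact Or.inl rfl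

lemma target_of_v2l {i : V} (h2 : occ (v2l i)) :
    target occ i = v1 i ∨ target occ i = v2l i := by
  have hdsr : ¬ DownslantRight occ i := fun hd => (hd.1.2 (Or.inl hd.2.2.2.2)).1 h2
  rw [target, if_neg hdsr]
  split
  · exact Or.inr rfl
  · exact Or.inl rfl

/-- A new-position hypothesis for a robot at `a`. -/
def NewPos (a a' : V) : Prop :=
  a' = a ∨ (Impedensable occ a ∧ a' = target occ a)

lemma core_eq {a a' b' : V} (ha' : NewPos occ a a') (hb' : NewPos occ a b') :
    a' = b' ∨ Adj a' b' ∨ Adj b' a' := by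
  have key : ∀ x, NewPos occ a x → x = a ∨ Adj a x := by
    rintro x (hx|⟨_, hx⟩)
    · exact Or.inl hx
    · subst hx
      rcases target_mem occ (i := a) with h|h|h <;> rw [h] <;>
        simp [Adj]
  rcases key a' ha' with h1|h1 <;> rcases key b' hb' with h2|h2
  · exact Or.inl (h1.trans h2.symm)
  · subst h1; exact Or.inr (Or.inl h2)
  · subst h2; exact Or.inr (Or.inr h1)
  · rcases ha' with h|⟨_, h⟩
    · subst h; exact Or.inr (Or.inl h2)
    · rcases hb' with h'|⟨_, h'⟩
      · subst h'; exact Or.inr (Or.inl (adj_symm h1))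
      · exact Or.inl (h.trans h'.symm)

lemma core_v1 {a b a' b' : V} (_ha : occ a) (hb : b = v1 a)
    (ha' : NewPos occ a a') (hb' : NewPos occ b b') :
    a' = b' ∨ Adj a' b' ∨ Adj b' a' := by
  subst hb
  have hv4 : occ (v4 (v1 a)) := by
    have : v4 (v1 a) = a := by obtain ⟨p, q⟩ := a; simp [v1, v4]
    rw [this]; exact _ha
  have hb'' : b' = v1 a := by
    rcases hb' with h|⟨hi, _⟩
    · exact h
    · exact absurd hi (not_imped_of_v4 occ hv4)
  subst hb''
  rcases ha' with h|⟨_, h⟩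
  · subst h
    exact Or.inr (Or.inl (Or.inl rfl))
  · subst h
    obtain ⟨p, q⟩ := a
    rcases target_mem occ (i := (p, q)) with h|h|h <;> rw [h] <;>
      simp [Adj, v1, v2l, v2r, v3l, v3r, v4, Prod.ext_iff] <;> omega

lemma core_v2l {a b a' b' : V} (ha : occ a) (hb2 : occ b) (hb : b = v2l a)
    (ha' : NewPos occ a a') (hb' : NewPos occ b b') :
    a' = b' ∨ Adj a' b' ∨ Adj b' a' := by
  subst hb
  have h3r : occ (v3r (v2l a)) := by
    have : v3r (v2l a) = a := by obtain ⟨p, q⟩ := a; simp [v3r, v2l]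
    rw [this]; exact ha
  have hbpos : b' = v2l a ∨ b' = v1 a := by
    rcases hb' with h|⟨hi, h⟩
    · exact Or.inl h
    · right
      rw [h, target_of_v3r occ h3r hi]
      obtain ⟨p, q⟩ := a; simp [v2r, v2l, v1]
  have hapos : a' = a ∨ a' = v1 a ∨ a' = v2l a := by
    rcases ha' with h|⟨hi, h⟩
    · exact Or.inl h
    · rcases target_of_v2l occ (i := a) hb2 with ht|ht <;> rw [ht] at h
      · exact Or.inr (Or.inl h)
      · exact Or.inr (Or.inr h)
  obtain ⟨p, q⟩ := a
  rcases hapos with h|h|h <;> rcases hbpos with h'|h' <;> subst h h' <;>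
    simp [Adj, v1, v2l, v2r, v3l, v3r, v4, Prod.ext_iff] <;> omega

lemma core_v2r {a b a' b' : V} (ha : occ a) (hb2 : occ b) (hb : b = v2r a)
    (ha' : NewPos occ a a') (hb' : NewPos occ b b') :
    a' = b' ∨ Adj a' b' ∨ Adj b' a' := by
  subst hb
  have h3l : occ (v3l (v2r a)) := by
    have : v3l (v2r a) = a := by obtain ⟨p, q⟩ := a; simp [v3l, v2r]
    rw [this]; exact ha
  have hbpos : b' = v2r a ∨ b' = v1 a := by
    rcases hb' with h|⟨hi, h⟩
    · exact Or.inl h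
    · right
      rw [h, target_of_v3l occ h3l hi]
      obtain ⟨p, q⟩ := a; simp [v2l, v2r, v1]
  have hapos : a' = a ∨ a' = v1 a ∨ a' = v2r a := by
    rcases ha' with h|⟨hi, h⟩
    · exact Or.inl h
    · rcases target_of_v2r occ (i := a) hb2 with ht|ht <;> rw [ht] at h
      · exact Or.inr (Or.inl h)
      · exact Or.inr (Or.inr h)
  obtain ⟨p, q⟩ := a
  rcases hapos with h|h|h <;> rcases hbpos with h'|h' <;> subst h h' <;>
    simp [Adj, v1, v2l, v2r, v3l, v3r, v4, Prod.ext_iff] <;> omega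

lemma key_lemma {a b a' b' : V} (ha : occ a) (hb : occ b)
    (hab : a = b ∨ Adj a b)
    (ha' : NewPos occ a a') (hb' : NewPos occ b b') :
    a' = b' ∨ Adj a' b' ∨ Adj b' a' := by
  have flip : ∀ x y : V, x = y ∨ Adj x y ∨ Adj y x →
      y = x ∨ Adj y x ∨ Adj x y := by tauto
  rcases hab with h|h
  · subst h; exact core_eq occ ha' hb'
  rcases h with h|h|h|h|h|h
  · exact core_v1 occ ha h ha' hb'
  · exact core_v2l occ ha hb h ha' hb'
  · exact core_v2r occ ha hb h ha' hb'
  · -- b = v3l a, so a = v2r b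
    refine flip _ _ (core_v2r occ hb ha ?_ hb' ha')
    subst h; obtain ⟨p, q⟩ := a; simp [v3l, v2r]
  · -- b = v3r a, so a = v2l b
    refine flip _ _ (core_v2l occ hb ha ?_ hb' ha')
    subst h; obtain ⟨p, q⟩ := a; simp [v3r, v2l]
  · -- b = v4 a, so a = v1 b
    refine flip _ _ (core_v1 occ hb ?_ hb' ha')
    subst h; obtain ⟨p, q⟩ := a; simp [v4, v1]

end Aux

/-- a step of the GSGS algorithm preserves connectivity of the
visibility graph. -/
theorem stmt6 (n : ℕ) (s s' : Fin n → V)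
    (hconn : ConnectedOcc (Occ s)) (hstep : Step s s') :
    ConnectedOcc (Occ s') := by
  obtain ⟨M, -, hM, hupd⟩ := hstep
  have hnew : ∀ r, NewPos (Occ s) (s r) (s' r) := by
    intro r
    rw [hupd r]
    by_cases hr : r ∈ M
    · exact Or.inr ⟨hM r hr, by rw [if_pos hr]⟩
    · exact Or.inl (by rw [if_neg hr])
  have step1 : ∀ (r r' : Fin n), (s r = s r' ∨ Adj (s r) (s r')) →
      Relation.ReflTransGen (fun x y => Occ s' x ∧ Occ s' y ∧ Adj x y)
        (s' r) (s' r') := by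
    intro r r' hrr
    rcases key_lemma (Occ s) ⟨r, rfl⟩ ⟨r', rfl⟩ hrr (hnew r) (hnew r') with h|h|h
    · exact h ▸ Relation.ReflTransGen.refl
    · exact Relation.ReflTransGen.single ⟨⟨r, rfl⟩, ⟨r', rfl⟩, h⟩
    · exact Relation.ReflTransGen.single ⟨⟨r, rfl⟩, ⟨r', rfl⟩, adj_symm h⟩
  rintro a b ⟨r, rfl⟩ ⟨r', rfl⟩
  have hpath := hconn (s r) (s r') ⟨r, rfl⟩ ⟨r', rfl⟩
  have main : ∀ x y, Relation.ReflTransGen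
      (fun x y => Occ s x ∧ Occ s y ∧ Adj x y) x y →
      ∀ (u u' : Fin n), s u = x → s u' = y →
      Relation.ReflTransGen (fun x y => Occ s' x ∧ Occ s' y ∧ Adj x y)
        (s' u) (s' u') := by
    intro x y h
    induction h with
    | refl =>
      intro u u' hu hu'
      exact step1 u u' (Or.inl (hu.trans hu'.symm))
    | tail _ hedge ih =>
      intro u u' hu hu'
      obtain ⟨⟨w, hw⟩, _, hadj⟩ := hedge
      exact (ih u w hu hw).trans
        (step1 w u' (Or.inr (by rw [hw, hu']; exact hadj)))
  exact main (s r) (s r') hpath r r' rfl rfl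

end GSGS
end

section
/- If s' is obtained from a global state s by a step of the GSGS algorithm, then min{q : (p,q) occupied in s'} = min{q : (p,q) occupied in s} and min{p+q : (p,q) occupied in s'} = min{p+q : (p,q) occupied in s}; that is, throughout any execution of the GSGS algorithm the bottom r2l slant and the bottom l2r slant of the configuration never change. -/
open scoped Classical

namespace GSGS

lemma target_f_le (occ : V → Prop) (i : V) (f : V → ℤ)
    (h1 : f (v1 i) ≤ f i) (h2 : f (v2l i) ≤ f i) (h3 : f (v2r i) ≤ f i) :
    f (target occ i) ≤ f i := by
  unfold target; split_ifs <;> assumption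

lemma exists_occ_snd_le (occ : V → Prop) (i : V) (hi : occ i)
    (h : Impedensable occ i) :
    ∃ x, occ x ∧ x.2 ≤ (target occ i).2 := by
  unfold target
  split_ifs with h1 h2
  · exact ⟨v2r i, h1.2.2.2.2, le_refl _⟩
  · exact ⟨i, hi, by simp [v2l]⟩
  · rcases h with hd | hr | hl | hne
    · exact ⟨v1 i, hd.2.1, le_refl _⟩
    · exact absurd hr h1
    · exact absurd hl h2
    · exact ⟨v2r i, hne.2.1, by simp [v1, v2r]⟩

lemma exists_occ_sum_le (occ : V → Prop) (i : V) (hi : occ i)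
    (h : Impedensable occ i) :
    ∃ x, occ x ∧ x.1 + x.2 ≤ (target occ i).1 + (target occ i).2 := by
  unfold target
  split_ifs with h1 h2
  · exact ⟨i, hi, by simp [v2r]⟩
  · exact ⟨v2l i, h2.2.2.2.2, le_refl _⟩
  · rcases h with hd | hr | hl | hne
    · exact ⟨v1 i, hd.2.1, le_refl _⟩
    · exact absurd hr h1
    · exact absurd hl h2
    · exact ⟨v2l i, hne.2.2.1, by simp [v1, v2l]; omega⟩

lemma minVal_step_eq {n : ℕ} (s s' : Fin n → V) (f : V → ℤ)
    (hn : Nonempty (Fin n)) (M : Set (Fin n))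
    (hImp : ∀ r ∈ M, Impedensable (Occ s) (s r))
    (hs' : ∀ r, s' r = if r ∈ M then target (Occ s) (s r) else s r)
    (hle : ∀ i, f (target (Occ s) i) ≤ f i)
    (hex : ∀ i, Occ s i → Impedensable (Occ s) i →
      ∃ x, Occ s x ∧ f x ≤ f (target (Occ s) i)) :
    minVal s' f hn = minVal s f hn := by
  have hmem : ∀ (t : Fin n → V) (r : Fin n),
      f (t r) ∈ Finset.image (fun r => f (t r)) Finset.univ := by
    intro t r; exact Finset.mem_image.mpr ⟨r, Finset.mem_univ r, rfl⟩
  apply le_antisymm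
  · obtain ⟨r0, _, hr0⟩ := Finset.mem_image.mp
      (Finset.min'_mem (Finset.image (fun r => f (s r)) Finset.univ)
        ((Finset.univ_nonempty_iff.mpr hn).image _))
    have h1 : f (s' r0) ≤ f (s r0) := by
      rw [hs' r0]; split_ifs
      · exact hle _
      · exact le_refl _
    calc minVal s' f hn ≤ f (s' r0) := Finset.min'_le _ _ (hmem s' r0)
      _ ≤ f (s r0) := h1
      _ = minVal s f hn := hr0
  · apply Finset.le_min'
    intro y hy
    obtain ⟨r, _, rfl⟩ := Finset.mem_image.mp hy
    rw [hs' r]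
    split_ifs with hM
    · obtain ⟨x, ⟨r', hr'⟩, hfx⟩ := hex (s r) ⟨r, rfl⟩ (hImp r hM)
      calc minVal s f hn ≤ f (s r') := Finset.min'_le _ _ (hmem s r')
        _ = f x := by rw [hr']
        _ ≤ _ := hfx
    · exact Finset.min'_le _ _ (hmem s r)

/-- a step of the GSGS algorithm preserves the bottom r2l slant
min q and the bottom l2r slant min (p+q). -/
theorem stmt7 (n : ℕ) (s s' : Fin n → V) (hstep : Step s s') :
    minVal s' Prod.snd (by obtain ⟨M, ⟨r, _⟩, _⟩ := hstep; exact ⟨r⟩) =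
      minVal s Prod.snd (by obtain ⟨M, ⟨r, _⟩, _⟩ := hstep; exact ⟨r⟩) ∧
    minVal s' (fun v => v.1 + v.2) (by obtain ⟨M, ⟨r, _⟩, _⟩ := hstep; exact ⟨r⟩) =
      minVal s (fun v => v.1 + v.2) (by obtain ⟨M, ⟨r, _⟩, _⟩ := hstep; exact ⟨r⟩) := by
  obtain ⟨M, hMne, hImp, hs'⟩ := hstep
  constructor
  · exact minVal_step_eq s s' Prod.snd _ M hImp hs'
      (fun i => target_f_le _ i Prod.snd (by simp [v1]) (by simp [v2l])
        (by simp [v2r]))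
      (fun i => exists_occ_snd_le _ i)
  · exact minVal_step_eq s s' (fun v => v.1 + v.2) _ M hImp hs'
      (fun i => target_f_le _ i (fun v => v.1 + v.2) (by simp [v1])
        (by simp [v2l]) (by simp [v2r]))
      (fun i => exists_occ_sum_le _ i)

end GSGS
end

section
/- If s' is obtained from a global state s by a step of the GSGS algorithm, then min{p : (p,q) occupied in s'} ≥ min{p : (p,q) occupied in s} and max{p : (p,q) occupied in s'} ≤ max{p : (p,q) occupied in s}; that is, throughout any execution of the GSGS algorithm the left layer does not move leftwards and the right layer does not move rightwards. -/
open scoped Classical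

namespace GSGS

/-- under a step of the GSGS algorithm the left layer does not
move leftwards and the right layer does not move rightwards. -/
theorem stmt8 (n : ℕ) (s s' : Fin n → V) (hstep : Step s s') :
    minVal s Prod.fst (by obtain ⟨M, ⟨r, _⟩, _⟩ := hstep; exact ⟨r⟩) ≤
      minVal s' Prod.fst (by obtain ⟨M, ⟨r, _⟩, _⟩ := hstep; exact ⟨r⟩) ∧
    maxVal s' Prod.fst (by obtain ⟨M, ⟨r, _⟩, _⟩ := hstep; exact ⟨r⟩) ≤
      maxVal s Prod.fst (by obtain ⟨M, ⟨r, _⟩, _⟩ := hstep; exact ⟨r⟩) := by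
  obtain ⟨M, hM, himp, heq⟩ := hstep
  have key : ∀ r : Fin n, ∃ r0 : Fin n, (s' r).1 = (s r0).1 := by
    intro r
    rw [heq r]
    by_cases hrM : r ∈ M
    · simp only [hrM, if_true]
      unfold target
      by_cases hdr : DownslantRight (Occ s) (s r)
      · obtain ⟨r0, hr0⟩ := hdr.2.2.2.2
        exact ⟨r0, by simp [hdr, hr0]⟩
      · by_cases hdl : DownslantLeft (Occ s) (s r)
        · obtain ⟨r0, hr0⟩ := hdl.2.2.2.2
          exact ⟨r0, by simp [hdr, hdl, hr0]⟩
        · exact ⟨r, by simp [hdr, hdl, v1]⟩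
    · exact ⟨r, by simp [hrM]⟩
  unfold minVal maxVal
  constructor
  · refine Finset.le_min' (α := ℤ) _ _ _ (fun y hy => ?_)
    simp only [Finset.mem_image, Finset.mem_univ, true_and] at hy
    obtain ⟨r, hr⟩ := hy
    obtain ⟨r0, hr0⟩ := key r
    rw [← hr, hr0]
    apply Finset.min'_le
    exact Finset.mem_image.mpr ⟨r0, Finset.mem_univ _, rfl⟩
  · refine Finset.max'_le (α := ℤ) _ _ _ (fun y hy => ?_)
    simp only [Finset.mem_image, Finset.mem_univ, true_and] at hy
    obtain ⟨r, hr⟩ := hy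
    obtain ⟨r0, hr0⟩ := key r
    rw [← hr, hr0]
    apply Finset.le_max'
    exact Finset.mem_image.mpr ⟨r0, Finset.mem_univ _, rfl⟩

end GSGS
end

section
/- If the visibility graph of a global state s is connected and at least two distinct vertices are occupied, then every occupied vertex i of s whose y-coordinate q+p/2 is maximal among the occupied vertices satisfies Impedensable-GSGS(i); in particular, some robot is enabled in every suboptimal connected state. -/
open scoped Classical

namespace GSGS

/-- in a connected state with at least two occupied vertices,
every occupied vertex of maximal y-coordinate is impedensable. -/
theorem stmt9 (n : ℕ) (s : Fin n → V)
    (hconn : ConnectedOcc (Occ s))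
    (htwo : ∃ a b : V, Occ s a ∧ Occ s b ∧ a ≠ b) :
    ∀ i, Occ s i → (∀ j, Occ s j → yC j ≤ yC i) →
      Impedensable (Occ s) i := by
  intro i hi hmax
  -- the three "upper" neighbours are unoccupied by maximality
  have hy4 : ¬ Occ s (v4 i) := by
    intro h
    have h1 := hmax _ h
    have : yC (v4 i) = yC i + 1 := by simp [yC, v4]; ring
    rw [this] at h1; linarith
  have hy3r : ¬ Occ s (v3r i) := by
    intro h
    have h1 := hmax _ h
    have : yC (v3r i) = yC i + 1/2 := by simp [yC, v3r]; ring
    rw [this] at h1; linarith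
  have hy3l : ¬ Occ s (v3l i) := by
    intro h
    have h1 := hmax _ h
    have : yC (v3l i) = yC i + 1/2 := by simp [yC, v3l]; ring
    rw [this] at h1; linarith
  -- some neighbour of i is occupied
  have hnb : Occ s (v1 i) ∨ Occ s (v2l i) ∨ Occ s (v2r i) := by
    obtain ⟨a, b, ha, hb, hab⟩ := htwo
    obtain ⟨c, hc, hci⟩ : ∃ c, Occ s c ∧ c ≠ i := by
      rcases eq_or_ne a i with rfl | h
      · exact ⟨b, hb, fun h => hab h.symm⟩
      · exact ⟨a, ha, h⟩
    have hchain := hconn i c hi hc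
    rcases Relation.ReflTransGen.cases_head hchain with h | ⟨d, ⟨_, hd, hadj⟩, _⟩
    · exact absurd h.symm hci
    · rcases hadj with h | h | h | h | h | h
      · exact Or.inl (h ▸ hd)
      · exact Or.inr (Or.inl (h ▸ hd))
      · exact Or.inr (Or.inr (h ▸ hd))
      · exact absurd (h ▸ hd) hy3l
      · exact absurd (h ▸ hd) hy3r
      · exact absurd (h ▸ hd) hy4
  by_cases hE : Extreme (Occ s) i
  · -- Extreme case
    by_cases h1 : Occ s (v1 i)
    · exact Or.inl ⟨hE, h1, hy3r, hy3l⟩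
    · -- not v1; so v2l or v2r occupied
      have hnot_dw : ¬ Downward (Occ s) i := fun h => h1 h.2.1
      rcases hnb with h | h | h
      · exact absurd h h1
      · -- v2l occupied
        have h2r : ¬ Occ s (v2r i) := fun h2 => (hE.2 (Or.inl h2)).1 h
        have hnot_t : ¬ Terminating (Occ s) i := fun ht =>
          ht.2 (v2l i) (Or.inr (Or.inl rfl)) h
        have hnot_s : ¬ Staying (Occ s) i := by
          rintro ⟨_, hs | hs | hs | hs⟩ <;>
          · have := (hs (v2l i) (Or.inr (Or.inl rfl))).mp h
            simp only [Set.mem_insert_iff, Set.mem_singleton_iff, v2l, v1, v3r, v3l,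
              Prod.mk.injEq] at this
            omega
        exact Or.inr (Or.inr (Or.inl ⟨hE, hnot_dw, hnot_s, hnot_t, h⟩))
      · -- v2r occupied
        have hnot_t : ¬ Terminating (Occ s) i := fun ht =>
          ht.2 (v2r i) (Or.inr (Or.inr (Or.inl rfl))) h
        have hnot_s : ¬ Staying (Occ s) i := by
          rintro ⟨_, hs | hs | hs | hs⟩ <;>
          · have := (hs (v2r i) (Or.inr (Or.inr (Or.inl rfl)))).mp h
            simp only [Set.mem_insert_iff, Set.mem_singleton_iff, v2r, v1, v3r, v3l,
              Prod.mk.injEq] at this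
            omega
        exact Or.inr (Or.inl ⟨hE, hnot_dw, hnot_s, hnot_t, h⟩)
  · -- Non-Extreme case
    have h2 : Occ s (v2r i) ∧ Occ s (v2l i) := by
      by_contra hc
      apply hE
      refine ⟨hy4, fun hor => ⟨?_, hy3l⟩⟩
      intro h2l
      rcases hor with h2r | h3r
      · exact hc ⟨h2r, h2l⟩
      · exact hy3r h3r
    exact Or.inr (Or.inr (Or.inr ⟨hE, h2.1, h2.2, hy3r, hy3l, hy4⟩))

end GSGS
end

section
/- If the visibility graph of a global state s is connected, at least two distinct vertices are occupied in s, and s' is obtained from s by the synchronous step of the GSGS algorithm (every robot at a vertex satisfying Impedensable-GSGS moves to its prescribed target), then max{q+p/2 : (p,q) occupied in s'} ≤ max{q+p/2 : (p,q) occupied in s} − 1/2; that is, in every round the top layer moves down by at least 1/2 unit along the y-axis. -/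
open scoped Classical

namespace GSGS

lemma yC_v1 (i : V) : yC (v1 i) = yC i - 1 := by
  unfold yC v1; push_cast; ring

lemma yC_v4 (i : V) : yC (v4 i) = yC i + 1 := by
  unfold yC v4; push_cast; ring

lemma yC_v2l (i : V) : yC (v2l i) = yC i - 1/2 := by
  unfold yC v2l; push_cast; ring

lemma yC_v2r (i : V) : yC (v2r i) = yC i - 1/2 := by
  unfold yC v2r; push_cast; ring

lemma yC_v3l (i : V) : yC (v3l i) = yC i + 1/2 := by
  unfold yC v3l; push_cast; ring

lemma yC_v3r (i : V) : yC (v3r i) = yC i + 1/2 := by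
  unfold yC v3r; push_cast; ring

lemma adj_v1 (i : V) : Adj i (v1 i) := Or.inl rfl
lemma adj_v2l (i : V) : Adj i (v2l i) := Or.inr (Or.inl rfl)
lemma adj_v2r (i : V) : Adj i (v2r i) := Or.inr (Or.inr (Or.inl rfl))
lemma adj_v3l (i : V) : Adj i (v3l i) := Or.inr (Or.inr (Or.inr (Or.inl rfl)))
lemma adj_v3r (i : V) : Adj i (v3r i) :=
  Or.inr (Or.inr (Or.inr (Or.inr (Or.inl rfl))))

/-- half-integrality gap: distinct y-values differ by at least 1/2. -/
lemma yC_gap {a b : V} (h : yC a < yC b) : yC a ≤ yC b - 1/2 := by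
  unfold yC at h ⊢
  have h2 : (2*a.2 + a.1 : ℤ) < 2*b.2 + b.1 := by
    by_contra hc
    push_neg at hc
    have : ((2*b.2 + b.1 : ℤ) : ℚ) ≤ ((2*a.2 + a.1 : ℤ) : ℚ) := by exact_mod_cast hc
    push_cast at this; linarith
  have h3 : (2*a.2 + a.1 : ℤ) + 1 ≤ 2*b.2 + b.1 := h2
  have h4 : ((2*a.2 + a.1 : ℤ) : ℚ) + 1 ≤ ((2*b.2 + b.1 : ℤ) : ℚ) := by exact_mod_cast h3
  push_cast at h4; linarith

/-- The prescribed target always lies at least 1/2 lower. -/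
lemma yC_target_le (occ : V → Prop) (i : V) : yC (target occ i) ≤ yC i - 1/2 := by
  unfold target
  split_ifs
  · rw [yC_v2r]
  · rw [yC_v2l]
  · rw [yC_v1]; linarith

/-- Key lemma: an occupied vertex of maximal y-coordinate in a connected,
non-gathered state is impedensable. -/
lemma key {occ : V → Prop} {i : V} (hi : occ i)
    (hmax : ∀ x, occ x → yC x ≤ yC i)
    (hconn : ConnectedOcc occ)
    (hb : ∃ b, occ b ∧ b ≠ i) :
    Impedensable occ i := by
  have h4 : ¬ occ (v4 i) := fun h => by
    have := hmax _ h; rw [yC_v4] at this; linarith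
  have h3r : ¬ occ (v3r i) := fun h => by
    have := hmax _ h; rw [yC_v3r] at this; linarith
  have h3l : ¬ occ (v3l i) := fun h => by
    have := hmax _ h; rw [yC_v3l] at this; linarith
  obtain ⟨b, hob, hbi⟩ := hb
  have hpath := hconn i b hi hob
  have hnbr : occ (v1 i) ∨ occ (v2l i) ∨ occ (v2r i) := by
    rcases hpath.cases_head with heq | ⟨j, ⟨_, hoj, hadj⟩, _⟩
    · exact absurd heq.symm hbi
    · rcases hadj with h | h | h | h | h | h <;> subst h
      · exact Or.inl hoj
      · exact Or.inr (Or.inl hoj)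
      · exact Or.inr (Or.inr hoj)
      · exact absurd hoj h3l
      · exact absurd hoj h3r
      · exact absurd hoj h4
  by_cases hE : Extreme occ i
  · by_cases h1 : occ (v1 i)
    · exact Or.inl ⟨hE, h1, h3r, h3l⟩
    · have hnS : ¬ Staying occ i := by
        rintro ⟨_, hS | hS | hS | hS⟩
        · exact h3r ((hS (v3r i) (adj_v3r i)).mpr rfl)
        · exact h3l ((hS (v3l i) (adj_v3l i)).mpr rfl)
        · exact h3r ((hS (v3r i) (adj_v3r i)).mpr (by simp))
        · exact h3l ((hS (v3l i) (adj_v3l i)).mpr (by simp))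
      have hnD : ¬ Downward occ i := fun h => h1 h.2.1
      rcases hnbr with h | h | h
      · exact absurd h h1
      · have hnT : ¬ Terminating occ i := fun ht => ht.2 (v2l i) (adj_v2l i) h
        exact Or.inr (Or.inr (Or.inl ⟨hE, hnD, hnS, hnT, h⟩))
      · have hnT : ¬ Terminating occ i := fun ht => ht.2 (v2r i) (adj_v2r i) h
        exact Or.inr (Or.inl ⟨hE, hnD, hnS, hnT, h⟩)
  · have himp : ¬ ((occ (v2r i) ∨ occ (v3r i)) → ¬ occ (v2l i) ∧ ¬ occ (v3l i)) :=
      fun h => hE ⟨h4, h⟩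
    have h2rl : occ (v2r i) ∧ occ (v2l i) := by tauto
    exact Or.inr (Or.inr (Or.inr ⟨hE, h2rl.1, h2rl.2, h3r, h3l, h4⟩))

/-- in every synchronous round from a connected non-gathered
state, the top layer moves down by at least 1/2 unit along the y-axis. -/
theorem stmt10 (n : ℕ) (s s' : Fin n → V)
    (hconn : ConnectedOcc (Occ s))
    (htwo : ∃ a b : V, Occ s a ∧ Occ s b ∧ a ≠ b)
    (hstep : SyncStep s s') :
    maxVal s' yC (by obtain ⟨a, b, ⟨r, _⟩, _, _⟩ := htwo; exact ⟨r⟩) ≤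
      maxVal s yC (by obtain ⟨a, b, ⟨r, _⟩, _, _⟩ := htwo; exact ⟨r⟩) - 1/2 := by
  have hn : Nonempty (Fin n) := by obtain ⟨a, b, ⟨r, _⟩, _, _⟩ := htwo; exact ⟨r⟩
  set Y : ℚ := maxVal s yC hn with hY
  have hmaxS : ∀ x, Occ s x → yC x ≤ Y := by
    rintro x ⟨r', rfl⟩
    rw [hY]; unfold maxVal
    exact Finset.le_max' (Finset.image (fun r => yC (s r)) Finset.univ) _
      (Finset.mem_image.mpr ⟨r', Finset.mem_univ _, rfl⟩)
  have hattain : ∃ r0 : Fin n, yC (s r0) = Y := by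
    have := Finset.max'_mem (Finset.image (fun r => yC (s r)) Finset.univ)
      ((Finset.univ_nonempty_iff.mpr hn).image _)
    rw [Finset.mem_image] at this
    obtain ⟨r0, _, hr0⟩ := this
    exact ⟨r0, hr0⟩
  show maxVal s' yC hn ≤ Y - 1/2
  unfold maxVal
  apply Finset.max'_le
  intro y hy
  rw [Finset.mem_image] at hy
  obtain ⟨r, _, rfl⟩ := hy
  by_cases hI : Impedensable (Occ s) (s r)
  · rw [hstep r, if_pos hI]
    have h1 := yC_target_le (Occ s) (s r)
    have h2 := hmaxS (s r) ⟨r, rfl⟩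
    linarith
  · rw [hstep r, if_neg hI]
    have hle := hmaxS (s r) ⟨r, rfl⟩
    rcases lt_or_eq_of_le hle with h | h
    · obtain ⟨r0, hr0⟩ := hattain
      rw [← hr0] at h ⊢
      exact yC_gap h
    · exfalso
      have hmax' : ∀ x, Occ s x → yC x ≤ yC (s r) := by rw [h]; exact hmaxS
      have hb : ∃ b, Occ s b ∧ b ≠ s r := by
        obtain ⟨a, b, ha, hb', hab⟩ := htwo
        by_cases hc : a = s r
        · exact ⟨b, hb', fun he => hab (by rw [hc, he])⟩
        · exact ⟨a, ha, hc⟩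
      exact hI (key ⟨r, rfl⟩ hmax' hconn hb)

end GSGS
end

section
/- Let s₀, s₁, s₂, … be any execution of the GSGS algorithm, where each s_{t+1} is obtained from s_t by a step of the GSGS algorithm or s_{t+1}=s_t. Then for every t and every vertex (p,q) occupied in s_t: min{p : occupied in s₀} ≤ p ≤ max{p : occupied in s₀}, q ≥ d₀, p+q ≥ c₀, and q+p/2 ≤ max{q'+p'/2 : (p',q') occupied in s₀}, where c₀ = min{p+q : occupied in s₀} and d₀ = min{q : occupied in s₀}; that is, the robots never step out of the bounding polygon AB'QC'D determined by the initial left layer, right layer, top layer, bottom l2r slant, and bottom r2l slant. -/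
open scoped Classical

namespace GSGS

/-- Membership in the bounding polygon determined by the initial state. -/
def InPoly {n : ℕ} (s0 : Fin n → V) (hn : Nonempty (Fin n)) (v : V) : Prop :=
  minVal s0 Prod.fst hn ≤ v.1 ∧
  v.1 ≤ maxVal s0 Prod.fst hn ∧
  minVal s0 Prod.snd hn ≤ v.2 ∧
  minVal s0 (fun w => w.1 + w.2) hn ≤ v.1 + v.2 ∧
  yC v ≤ maxVal s0 yC hn

lemma minVal_le {n : ℕ} {α : Type*} [LinearOrder α]
    (s : Fin n → V) (f : V → α) (hn : Nonempty (Fin n)) (r : Fin n) :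
    minVal s f hn ≤ f (s r) :=
  Finset.min'_le _ _ (Finset.mem_image_of_mem _ (Finset.mem_univ r))

lemma le_maxVal {n : ℕ} {α : Type*} [LinearOrder α]
    (s : Fin n → V) (f : V → α) (hn : Nonempty (Fin n)) (r : Fin n) :
    f (s r) ≤ maxVal s f hn := by
  exact Finset.le_max' (Finset.image (fun r => f (s r)) Finset.univ) (f (s r))
    (Finset.mem_image_of_mem _ (Finset.mem_univ r))

lemma inPoly_init {n : ℕ} (s0 : Fin n → V) (hn : Nonempty (Fin n)) (r : Fin n) :
    InPoly s0 hn (s0 r) :=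
  ⟨minVal_le s0 Prod.fst hn r, le_maxVal s0 Prod.fst hn r,
   minVal_le s0 Prod.snd hn r, minVal_le s0 (fun w => w.1 + w.2) hn r,
   le_maxVal s0 yC hn r⟩

lemma inPoly_v1_of_sides {n : ℕ} (s0 : Fin n → V) (hn : Nonempty (Fin n)) (i : V)
    (hi : InPoly s0 hn i) (hr : InPoly s0 hn (v2r i)) (hl : InPoly s0 hn (v2l i)) :
    InPoly s0 hn (v1 i) := by
  obtain ⟨h1, h2, h3, h4, h5⟩ := hi
  obtain ⟨_, _, hr3, _, _⟩ := hr
  obtain ⟨_, _, _, hl4, _⟩ := hl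
  refine ⟨h1, h2, ?_, ?_, ?_⟩
  · exact hr3
  · have h4' : minVal s0 (fun w => w.1 + w.2) hn ≤ (i.1 - 1) + i.2 := hl4
    show minVal s0 (fun w => w.1 + w.2) hn ≤ i.1 + (i.2 - 1)
    linarith
  · have hle : yC (v1 i) ≤ yC i := by
      simp only [yC, v1]
      push_cast
      linarith
    exact hle.trans h5

/-- The key invariant: every robot stays in the bounding polygon. -/
lemma invariant (n : ℕ) (e : ℕ → Fin n → V)
    (hexec : ∀ t, Step (e t) (e (t + 1)) ∨ e (t + 1) = e t)
    (hn : Nonempty (Fin n)) :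
    ∀ t r, InPoly (e 0) hn (e t r) := by
  intro t
  induction t with
  | zero => exact inPoly_init (e 0) hn
  | succ t ih =>
    rcases hexec t with ⟨M, _, hMimp, hmove⟩ | heq
    · intro r
      rw [hmove r]
      split_ifs with hrM
      · have himp := hMimp r hrM
        set i := e t r with hi
        unfold target
        split_ifs with hdsr hdsl
        · obtain ⟨r', hr'⟩ := hdsr.2.2.2.2
          have := ih r'; rwa [hr'] at this
        · obtain ⟨r', hr'⟩ := hdsl.2.2.2.2
          have := ih r'; rwa [hr'] at this
        · rcases himp with hd | h | h | hne
          · obtain ⟨r', hr'⟩ := hd.2.1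
            have := ih r'; rwa [hr'] at this
          · exact absurd h hdsr
          · exact absurd h hdsl
          · refine inPoly_v1_of_sides (e 0) hn i (ih r) ?_ ?_
            · obtain ⟨r', hr'⟩ := hne.2.1
              have := ih r'; rwa [hr'] at this
            · obtain ⟨r', hr'⟩ := hne.2.2.1
              have := ih r'; rwa [hr'] at this
      · exact ih r
    · intro r; rw [heq]; exact ih r

/-- in any execution of the GSGS algorithm the robots never
step out of the bounding polygon AB'QC'D determined by the initial left layer,
right layer, top layer, bottom l2r slant and bottom r2l slant. -/
theorem stmt12 (n : ℕ) (e : ℕ → Fin n → V)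
    (hexec : ∀ t, Step (e t) (e (t + 1)) ∨ e (t + 1) = e t) :
    ∀ t (p q : ℤ) (hocc : Occ (e t) (p, q)),
      minVal (e 0) Prod.fst ⟨hocc.choose⟩ ≤ p ∧
      p ≤ maxVal (e 0) Prod.fst ⟨hocc.choose⟩ ∧
      minVal (e 0) Prod.snd ⟨hocc.choose⟩ ≤ q ∧
      minVal (e 0) (fun v => v.1 + v.2) ⟨hocc.choose⟩ ≤ p + q ∧
      yC (p, q) ≤ maxVal (e 0) yC ⟨hocc.choose⟩ := by
  intro t p q hocc
  obtain ⟨r, hr⟩ := id hocc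
  have h := invariant n e hexec ⟨hocc.choose⟩ t r
  rw [hr] at h
  exact h

end GSGS
end

section
/- If the visibility graph of a global state s of n robots is connected, then max{q+p/2 : (p,q) occupied in s} − (c+d)/2 ≤ n, where c = min{p+q : occupied in s} and d = min{q : occupied in s}; that is, the vertical depth of the bounding polygon AB'QC'D (from the top layer down to the intersection point Q=(c−d,d) of the bottom l2r slant and the bottom r2l slant, whose y-coordinate is (c+d)/2) is at most n units. -/
open scoped Classical

namespace GSGS

/-- Discrete intermediate value theorem along a path in the occupied graph. -/
lemma ivt (occ : V → Prop) (g : V → ℤ)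
    (hlip : ∀ a b : V, Adj a b → g b ≤ g a + 1) :
    ∀ a b : V, Relation.ReflTransGen (fun x y => occ x ∧ occ y ∧ Adj x y) a b →
      occ a → ∀ k : ℤ, g a ≤ k → k ≤ g b → ∃ v, occ v ∧ g v = k := by
  intro a b h
  induction h with
  | refl => intro ha k h1 h2; exact ⟨a, ha, le_antisymm h1 h2⟩
  | @tail b c hab hbc ih =>
    intro ha k h1 h2
    by_cases hk : k ≤ g b
    · exact ih ha k h1 hk
    · push_neg at hk
      have := hlip b c hbc.2.2
      exact ⟨c, hbc.2.1, by omega⟩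

/-- The gap of a 1-Lipschitz integer function over a connected set of ≤ n
occupied vertices is at most n - 1. -/
lemma gap_le (n : ℕ) (hn : 0 < n) (s : Fin n → V)
    (hconn : ConnectedOcc (Occ s)) (g : V → ℤ)
    (hlip : ∀ a b : V, Adj a b → g b ≤ g a + 1) :
    maxVal s g (Fin.pos_iff_nonempty.mp hn) ≤
      minVal s g (Fin.pos_iff_nonempty.mp hn) + (n - 1 : ℤ) := by
  have hne := Fin.pos_iff_nonempty.mp hn
  set m := minVal s g hne with hm
  set M := maxVal s g hne with hM
  obtain ⟨x, hx, hxv⟩ := Finset.mem_image.mp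
    (Finset.min'_mem (Finset.image (fun r => g (s r)) Finset.univ)
      ((Finset.univ_nonempty_iff.mpr hne).image _))
  obtain ⟨y, hy, hyv⟩ := Finset.mem_image.mp
    (Finset.max'_mem (Finset.image (fun r => g (s r)) Finset.univ)
      ((Finset.univ_nonempty_iff.mpr hne).image _))
  have hpath := hconn (s x) (s y) ⟨x, rfl⟩ ⟨y, rfl⟩
  -- every integer in [m, M] is attained
  have hIcc : Finset.Icc m M ⊆ Finset.image (fun r => g (s r)) Finset.univ := by
    intro k hk
    rw [Finset.mem_Icc] at hk
    obtain ⟨v, hv, hgv⟩ := ivt (Occ s) g hlip (s x) (s y) hpath ⟨x, rfl⟩ k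
      (by rw [hxv]; exact hk.1) (by rw [hyv]; exact hk.2)
    obtain ⟨r, hr⟩ := hv
    exact Finset.mem_image.mpr ⟨r, Finset.mem_univ r, by rw [hr]; exact hgv⟩
  have hmem : g (s x) ∈ Finset.image (fun r => g (s r)) Finset.univ :=
    Finset.mem_image.mpr ⟨x, Finset.mem_univ x, rfl⟩
  have hmM : m ≤ M :=
    le_trans (Finset.min'_le _ _ hmem) (Finset.le_max' _ _ hmem)
  have hcard := Finset.card_le_card hIcc
  have h1 : (Finset.Icc m M).card = (M + 1 - m).toNat := Int.card_Icc m M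
  have h2 : (Finset.image (fun r => g (s r)) Finset.univ).card ≤ n := by
    calc (Finset.image (fun r => g (s r)) Finset.univ).card
        ≤ (Finset.univ : Finset (Fin n)).card := Finset.card_image_le
      _ = n := Finset.card_univ.trans (Fintype.card_fin n)
  omega

theorem aux_le_bounds {n : ℕ} (hne : Nonempty (Fin n)) (s : Fin n → V)
    (g : V → ℤ) (r : Fin n) :
    minVal s g hne ≤ g (s r) ∧ g (s r) ≤ maxVal s g hne := by
  have hmem : g (s r) ∈ Finset.image (fun r => g (s r)) Finset.univ :=
    Finset.mem_image.mpr ⟨r, Finset.mem_univ r, rfl⟩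
  exact ⟨Finset.min'_le _ _ hmem, Finset.le_max' _ _ hmem⟩

/-- in a connected state of n robots, the vertical depth from
the top layer down to Q = (c - d, d) (whose y-coordinate is (c+d)/2) is at
most n units, where c = min (p+q) and d = min q over occupied vertices. -/
theorem stmt14 (n : ℕ) (hn : 0 < n) (s : Fin n → V)
    (hconn : ConnectedOcc (Occ s)) :
    maxVal s yC (Fin.pos_iff_nonempty.mp hn) -
      (((minVal s (fun v => v.1 + v.2) (Fin.pos_iff_nonempty.mp hn) : ℤ) : ℚ) +
        ((minVal s Prod.snd (Fin.pos_iff_nonempty.mp hn) : ℤ) : ℚ)) / 2 ≤ (n : ℚ) := by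
  have hne := Fin.pos_iff_nonempty.mp hn
  -- Lipschitz properties
  have hlip1 : ∀ a b : V, Adj a b → (b.1 + b.2) ≤ (a.1 + a.2) + 1 := by
    intro a b hab
    rcases hab with h | h | h | h | h | h <;>
      simp [h, v1, v2l, v2r, v3l, v3r, v4] <;> omega
  have hlip2 : ∀ a b : V, Adj a b → b.2 ≤ a.2 + 1 := by
    intro a b hab
    rcases hab with h | h | h | h | h | h <;>
      simp [h, v1, v2l, v2r, v3l, v3r, v4] <;> omega
  have hg1 := gap_le n hn s hconn (fun v => v.1 + v.2) hlip1
  have hg2 := gap_le n hn s hconn Prod.snd hlip2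
  -- the robot achieving the max of yC
  obtain ⟨r, hr, hrv⟩ := Finset.mem_image.mp
    (Finset.max'_mem (Finset.image (fun r => yC (s r)) Finset.univ)
      ((Finset.univ_nonempty_iff.mpr hne).image _))
  have hmax : maxVal s yC hne = yC (s r) := hrv.symm
  have hb1 := (aux_le_bounds hne s (fun v => v.1 + v.2) r).2
  have hb2 := (aux_le_bounds hne s Prod.snd r).2
  set c := minVal s (fun v => v.1 + v.2) hne with hc
  set d := minVal s Prod.snd hne with hd
  have h1 : (s r).1 + (s r).2 ≤ c + (n - 1 : ℤ) := le_trans hb1 hg1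
  have h2 : (s r).2 ≤ d + (n - 1 : ℤ) := le_trans hb2 hg2
  rw [hmax]
  have h1q : ((s r).1 : ℚ) + ((s r).2 : ℚ) ≤ (c : ℚ) + ((n : ℚ) - 1) := by
    exact_mod_cast h1
  have h2q : ((s r).2 : ℚ) ≤ (d : ℚ) + ((n : ℚ) - 1) := by exact_mod_cast h2
  have hn1 : (1 : ℚ) ≤ (n : ℚ) := by exact_mod_cast hn
  simp only [yC]
  linarith

end GSGS
end
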